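/- Suppose a₁, a₂ are positive integers and h₁, h₂ ∈ {1,2,3,6} with a₁·h₁ = 12 and a₂·h₂ ∈ {6, 18, 24, 36, ...} \ {12} (i.e., a₂·h₂ is a positive multiple of 6 different from 12). Then for all n ≥ 54, setting M(a,h) := (1 - 2ah/(2π√(24n-1)))·exp(2π√(24n-1)/(2ah)), one has |M(a₁,h₁) - M(a₂,h₂)| > 2·1334.42. -/

import Mathlib

open Real

/-- Main term magnitude `M(n; a, h)` from the proof of the main theorem. -/
noncomputable def mainTerm (n a h : ℕ) : ℝ :=
  (1 - 2 * a * h / (2 * π * Real.sqrt (24 * n - 1))) *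
    Real.exp (2 * π * Real.sqrt (24 * n - 1) / (2 * a * h))

/-!
With `x = 2π√(24n - 1) ≥ 225` and `G = exp (x / 72) ≥ exp 3 > 20`, the term `mainTerm n a h`
equals `(1 - 2m/x) · exp (x / 2m)` with `m = a h`. For `m = 12` it lies between `0.89 G³` and
`G³`; for `m = 6` it is at least `0.94 G⁶`, and for every other multiple of `6` it is at most
`exp (x / 36) = G²`. Both gaps `0.94 G⁶ - G³` and `0.89 G³ - G²` are far larger than
`2 · 1334.42` once `G ≥ 20`.
-/

lemma twenty_lt_exp_three : (20 : ℝ) < exp 3 := by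
  calc (20 : ℝ) < 2.7182818283 ^ 3 := by norm_num
    _ < exp 1 ^ 3 := by gcongr; exact exp_one_gt_d9
    _ = exp 3 := by rw [← exp_nat_mul]; norm_num

lemma le_two_pi_sqrt {n : ℕ} (hn : 54 ≤ n) : 225 ≤ 2 * π * √(24 * n - 1) := by
  have hn' : (54 : ℝ) ≤ n := by exact_mod_cast hn
  have hsqrt : 35.9 ≤ √(24 * (n : ℝ) - 1) := le_sqrt_of_sq_le (by linarith)
  nlinarith [pi_gt_d2]

lemma mainTerm_eq (n a h : ℕ) :
    mainTerm n a h = (1 - 2 * ((a * h : ℕ) : ℝ) / (2 * π * √(24 * n - 1))) *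
      exp (2 * π * √(24 * n - 1) / (2 * ((a * h : ℕ) : ℝ))) := by
  simp only [mainTerm, Nat.cast_mul, mul_assoc]

lemma exp_div_eq_exp_div_pow (x : ℝ) {c d : ℝ} {k : ℕ} (hd : d ≠ 0) (h : c * k = d) :
    exp (x / c) = exp (x / d) ^ k := by
  have hk : (k : ℝ) ≠ 0 := by rintro hk; simp [hk, eq_comm, hd] at h
  rw [← exp_nat_mul, ← h]; congr 1; field_simp

-- For `c = 0` this relies on `x / 0 = 0`: the left side is then `exp 0 = 1`.
lemma one_sub_div_mul_exp_div_le {x c d : ℝ} (hx : 0 ≤ x) (hd : 0 < d)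
    (hc : c = 0 ∨ d ≤ c) : (1 - c / x) * exp (x / c) ≤ exp (x / d) := by
  have hc₀ : 0 ≤ c := hc.elim (·.ge) hd.le.trans
  have hdiv : x / c ≤ x / d := by
    rcases hc with rfl | hdc
    · simpa using div_nonneg hx hd.le
    · exact div_le_div_of_nonneg_left hx hd hdc
  calc (1 - c / x) * exp (x / c) ≤ exp (x / c) :=
        mul_le_of_le_one_left (exp_pos _).le (by linarith [div_nonneg hc₀ hx])
    _ ≤ exp (x / d) := exp_le_exp.2 hdiv

theorem mainTerm_separation_general (n a₁ h₁ a₂ h₂ : ℕ) (hn : 54 ≤ n)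
    (h12 : a₁ * h₁ = 12) (hdvd : 6 ∣ a₂ * h₂) (hne : a₂ * h₂ ≠ 12) :
    2 * 1334.42 < |mainTerm n a₁ h₁ - mainTerm n a₂ h₂| := by
  set x := 2 * π * √(24 * (n : ℝ) - 1)
  have hx : 225 ≤ x := le_two_pi_sqrt hn
  have hM (a h : ℕ) : mainTerm n a h =
      (1 - 2 * ((a * h : ℕ) : ℝ) / x) * exp (x / (2 * ((a * h : ℕ) : ℝ))) :=
    mainTerm_eq n a h
  set G := exp (x / 72)
  have hG : 20 ≤ G := twenty_lt_exp_three.le.trans (exp_le_exp.2 (by linarith))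
  have hpow (k : ℕ) (c : ℝ) (hc : c * k = 72) : exp (x / c) = G ^ k :=
    exp_div_eq_exp_div_pow x (by norm_num) hc
  have hM₁ : mainTerm n a₁ h₁ = (1 - 24 / x) * G ^ 3 := by
    rw [hM, h12, ← hpow 3 24 (by norm_num)]; norm_num
  have hM₁_lb : (1 - 24 / 225) * G ^ 3 ≤ mainTerm n a₁ h₁ := hM₁ ▸ by gcongr
  have hM₁_ub : mainTerm n a₁ h₁ ≤ G ^ 3 := by
    rw [hM, h12, ← hpow 3 24 (by norm_num)]
    exact one_sub_div_mul_exp_div_le (by linarith) (by norm_num) (.inr (by norm_num))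
  obtain ⟨k, hk⟩ := hdvd
  rcases eq_or_ne k 1 with rfl | hk₁
  · have hM₂ : mainTerm n a₂ h₂ = (1 - 12 / x) * G ^ 6 := by
      rw [hM, hk, ← hpow 6 12 (by norm_num)]; norm_num
    have hM₂_lb : (1 - 12 / 225) * G ^ 6 ≤ mainTerm n a₂ h₂ := hM₂ ▸ by gcongr
    have hG₃ : (20 : ℝ) ^ 3 ≤ G ^ 3 := pow_le_pow_left₀ (by norm_num) hG 3
    exact lt_abs.2 (Or.inr (by nlinarith))
  · have hm : 2 * ((a₂ * h₂ : ℕ) : ℝ) = 0 ∨ 36 ≤ 2 * ((a₂ * h₂ : ℕ) : ℝ) := by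
      rw [hk]; norm_cast; omega
    have hM₂_ub : mainTerm n a₂ h₂ ≤ G ^ 2 := by
      rw [hM, ← hpow 2 36 (by norm_num)]
      exact one_sub_div_mul_exp_div_le (by linarith) (by norm_num) hm
    exact lt_abs.2 (Or.inl (by nlinarith))

theorem mainTerm_separation (n a₁ h₁ a₂ h₂ : ℕ) (hn : 54 ≤ n)
    (ha₁ : 0 < a₁) (ha₂ : 0 < a₂)
    (hh₁ : h₁ ∈ ({1, 2, 3, 6} : Set ℕ)) (hh₂ : h₂ ∈ ({1, 2, 3, 6} : Set ℕ))
    (h12 : a₁ * h₁ = 12) (hdvd : 6 ∣ a₂ * h₂) (hne : a₂ * h₂ ≠ 12) :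
    2 * 1334.42 < |mainTerm n a₁ h₁ - mainTerm n a₂ h₂| :=
  mainTerm_separation_general n a₁ h₁ a₂ h₂ hn h12 hdvd hne
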